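/- Let k ≥ 1 and let P be the string of length m = 2k+1 defined by P[2j-1] = k+j for 1 ≤ j ≤ k+1 and P[2j] = j for 1 ≤ j ≤ k, i.e., P = (k+1, 1, k+2, 2, …, 2k, k, 2k+1). Then in the Cartesian tree CT(P), every non-leaf node has exactly two children, and the left child of every non-leaf node is a leaf. -/

import Mathlib

/-- Ordered binary trees (possibly empty). -/
inductive BTree : Type
  | nil : BTree
  | node : BTree → BTree → BTree
  deriving DecidableEq

/-- The minimum value of a list of integers (with default `0` for the empty list). -/
noncomputable def minval (l : List ℤ) : ℤ := WithTop.untopD 0 l.minimum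

/-- The 0-based index of the leftmost occurrence of the minimum value. -/
noncomputable def minidx0 (l : List ℤ) : ℕ := l.idxOf (minval l)

theorem minidx0_lt_length {l : List ℤ} (h : l ≠ []) : minidx0 l < l.length := by
  obtain ⟨a, ha⟩ := WithTop.ne_top_iff_exists.mp (List.minimum_ne_top_of_ne_nil h)
  have hmem : a ∈ l := List.minimum_mem ha.symm
  have hval : minval l = a := by simp [minval, ← ha]
  rw [minidx0, hval]
  exact List.idxOf_lt_length_iff.mpr hmem

/-- The Cartesian tree of a string of integers. -/
noncomputable def CT (l : List ℤ) : BTree :=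
  if h : l = [] then .nil
  else .node (CT (l.take (minidx0 l))) (CT (l.drop (minidx0 l + 1)))
termination_by l.length
decreasing_by
  · have := minidx0_lt_length h
    simp [List.length_take]
    omega
  · have : 0 < l.length := List.length_pos_iff.mpr h
    simp [List.length_drop]
    omega

/-- The value of the 1-based position `i` of the string `T` (default `0`). -/
def val (T : List ℤ) (i : ℕ) : ℤ := T.getD (i - 1) 0

/-- `IsSubSeq n m I` : `I` is a strictly increasing sequence of `m` subscripts in `[1, n]`. -/
def IsSubSeq (n m : ℕ) (I : List ℕ) : Prop :=
  I.length = m ∧ I.Pairwise (· < ·) ∧ ∀ j ∈ I, 1 ≤ j ∧ j ≤ n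

/-- The subsequence `T_I` of `T` selected by the (1-based) subscript sequence `I`. -/
def seqAt (T : List ℤ) (I : List ℕ) : List ℤ := I.map (val T)

/-- The substring `P[a..b]` of `P` (1-based, inclusive). -/
def subslice (P : List ℤ) (a b : ℕ) : List ℤ := (P.take b).drop (a - 1)

/-- The left end of the maximal interval around position `v` in which `P[v]` is minimal:
one plus the rightmost position `j < v` carrying a value smaller than `P[v]` (or `1`). -/
def leftEnd (P : List ℤ) (v : ℕ) : ℕ :=
  (WithBot.unbotD 0 ((Finset.Icc 1 (v - 1)).filter (fun j => val P j < val P v)).max) + 1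

/-- The right end of the maximal interval around position `v` in which `P[v]` is minimal:
the leftmost position `j > v` carrying a value smaller than `P[v]`, minus one (or `|P|`). -/
def rightEnd (P : List ℤ) (v : ℕ) : ℕ :=
  (WithTop.untopD (P.length + 1)
    ((Finset.Icc (v + 1) P.length).filter (fun j => val P j < val P v)).min) - 1

/-- `P_v`: the substring of `P` spanned by the subtree of `CT(P)` rooted at node `v`
(nodes are identified with 1-based positions of `P`). -/
def Psub (P : List ℤ) (v : ℕ) : List ℤ := subslice P (leftEnd P v) (rightEnd P v)

/-- The left child `v.L` of node `v` in `CT(P)` (as a 1-based position), if it exists. -/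
noncomputable def leftChild (P : List ℤ) (v : ℕ) : Option ℕ :=
  if leftEnd P v < v then some (leftEnd P v + minidx0 (subslice P (leftEnd P v) (v - 1)))
  else none

/-- The right child `v.R` of node `v` in `CT(P)` (as a 1-based position), if it exists. -/
noncomputable def rightChild (P : List ℤ) (v : ℕ) : Option ℕ :=
  if v < rightEnd P v then some (v + 1 + minidx0 (subslice P (v + 1) (rightEnd P v)))
  else none

/-- `[ℓ, r]` is a fixed-interval with pivot `(v, i)`. -/
def IsFixedInterval (T P : List ℤ) (v i ℓ r : ℕ) : Prop :=
  1 ≤ ℓ ∧ r ≤ T.length ∧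
    ∃ I : List ℕ, IsSubSeq T.length (Psub P v).length I ∧ i ∈ I ∧
      (∀ j ∈ I, ℓ ≤ j ∧ j ≤ r) ∧ CT (seqAt T I) = CT (Psub P v) ∧
      val T i = minval (seqAt T I)

/-- `IntervalSsubset (ℓ', r') (ℓ, r)` : the interval `[ℓ', r']` is strictly contained
in the interval `[ℓ, r]`. -/
def IntervalSsubset (p q : ℕ × ℕ) : Prop := q.1 ≤ p.1 ∧ p.2 ≤ q.2 ∧ p ≠ q

/-- `[ℓ, r]` is a minimal fixed-interval with pivot `(v, i)`. -/
def IsMinFixedInterval (T P : List ℤ) (v i ℓ r : ℕ) : Prop :=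
  IsFixedInterval T P v i ℓ r ∧
    ¬∃ ℓ' r', IsFixedInterval T P v i ℓ' r' ∧ IntervalSsubset (ℓ', r') (ℓ, r)

open Classical in
/-- The left endpoint `L(v, i)` of the minimal fixed-interval `mfi(v, i)`,
which is `-∞` (i.e. `⊥`) if no (minimal) fixed-interval with pivot `(v, i)` exists. -/
noncomputable def mfiL (T P : List ℤ) (v i : ℕ) : WithBot ℕ :=
  if h : ∃ ℓ r, IsMinFixedInterval T P v i ℓ r then (h.choose : WithBot ℕ) else ⊥

open Classical in
/-- The right endpoint `R(v, i)` of the minimal fixed-interval `mfi(v, i)`,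
which is `∞` (i.e. `⊤`) if no (minimal) fixed-interval with pivot `(v, i)` exists. -/
noncomputable def mfiR (T P : List ℤ) (v i : ℕ) : WithTop ℕ :=
  if h : ∃ ℓ r, IsMinFixedInterval T P v i ℓ r then (h.choose_spec.choose : WithTop ℕ) else ⊤

/-- `I` is a trace of pattern `P` in text `T`. -/
def IsTrace (T P : List ℤ) (I : List ℕ) : Prop :=
  IsSubSeq T.length P.length I ∧ CT (seqAt T I) = CT P

/-- `[ℓ, r]` is an occurrence interval for `P` over `T`. -/
def IsOccInterval (T P : List ℤ) (ℓ r : ℕ) : Prop :=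
  1 ≤ ℓ ∧ r ≤ T.length ∧ ∃ I, IsTrace T P I ∧ ∀ j ∈ I, ℓ ≤ j ∧ j ≤ r

/-- `[ℓ, r]` is a minimal occurrence interval for `P` over `T`. -/
def IsMinOccInterval (T P : List ℤ) (ℓ r : ℕ) : Prop :=
  IsOccInterval T P ℓ r ∧
    ¬∃ ℓ' r', IsOccInterval T P ℓ' r' ∧ IntervalSsubset (ℓ', r') (ℓ, r)


/-- `AllNodes Q t` holds if the property `Q` holds at every node (subtree) of `t`. -/
def AllNodes (Q : BTree → Prop) : BTree → Prop
  | .nil => True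
  | .node l r => Q (.node l r) ∧ AllNodes Q l ∧ AllNodes Q r

/-- A leaf is a node with no children. -/
def BTree.IsLeaf (t : BTree) : Prop := t = .node .nil .nil

/-!
The string is the zigzag `a, b, a+1, b+1, …, a+k` with `b < a` (here `a = k+1`, `b = 1`).
Its minimum `b` sits at position 2, so the root has the single entry `a` as left subtree
and the zigzag `a+1, b+1, …` as right subtree; by induction `CT(P)` is the right
caterpillar whose spine nodes all carry a leaf as left child.
-/

/-- `zigzag k a b = [a, b, a+1, b+1, …, a+k-1, b+k-1, a+k]`. -/
def zigzag : ℕ → ℤ → ℤ → List ℤ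
  | 0, a, _ => [a]
  | k + 1, a, b => a :: b :: zigzag k (a + 1) (b + 1)

def caterpillar : ℕ → BTree
  | 0 => .node .nil .nil
  | k + 1 => .node (.node .nil .nil) (caterpillar k)

theorem length_zigzag (k : ℕ) (a b : ℤ) : (zigzag k a b).length = 2 * k + 1 := by
  induction k generalizing a b with
  | zero => rfl
  | succ k ih => simp only [zigzag, List.length_cons, ih]; ring

theorem getElem_zigzag (k : ℕ) (a b : ℤ) (i : ℕ) (hi : i < (zigzag k a b).length) :
    (zigzag k a b)[i] = if i % 2 = 0 then a + (i / 2 : ℕ) else b + (i / 2 : ℕ) := by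
  induction k generalizing a b i with
  | zero =>
    simp only [zigzag, List.length_singleton, Nat.lt_one_iff] at hi
    subst hi
    simp [zigzag]
  | succ k ih =>
    match i with
    | 0 => simp [zigzag]
    | 1 => simp [zigzag]
    | i + 2 =>
      simp only [zigzag, List.getElem_cons_succ]
      rw [ih, show (i + 2) % 2 = i % 2 by omega, show (i + 2) / 2 = i / 2 + 1 by omega]
      split <;> push_cast <;> ring

theorem le_of_mem_zigzag {k : ℕ} {a b x : ℤ} (hba : b ≤ a) (hx : x ∈ zigzag k a b) :
    b ≤ x := by
  induction k generalizing a b with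
  | zero =>
    rw [zigzag, List.mem_singleton] at hx
    omega
  | succ k ih =>
    simp only [zigzag, List.mem_cons] at hx
    rcases hx with rfl | rfl | hx
    · exact hba
    · exact le_rfl
    · have := ih (by omega) hx
      omega

theorem minval_eq_of_mem_of_forall_le {l : List ℤ} {b : ℤ} (hb : b ∈ l)
    (hle : ∀ x ∈ l, b ≤ x) : minval l = b := by
  rw [minval, List.minimum_eq_coe_iff.mpr ⟨hb, hle⟩, WithTop.untopD_coe]

theorem CT_singleton (a : ℤ) : CT [a] = .node .nil .nil := by
  have hidx : minidx0 [a] = 0 := by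
    rw [minidx0, minval_eq_of_mem_of_forall_le (List.mem_singleton_self a) (by simp)]
    exact List.idxOf_cons_self
  rw [CT, dif_neg (List.cons_ne_nil a []), hidx]
  simp [CT]

theorem CT_cons_cons {a b : ℤ} {l : List ℤ} (hba : b < a) (hle : ∀ x ∈ l, b ≤ x) :
    CT (a :: b :: l) = .node (.node .nil .nil) (CT l) := by
  have hidx : minidx0 (a :: b :: l) = 1 := by
    have hmin : minval (a :: b :: l) = b := minval_eq_of_mem_of_forall_le (by simp)
      (by simpa [List.forall_mem_cons] using ⟨hba.le, hle⟩)
    rw [minidx0, hmin, List.idxOf_cons_ne _ (by simpa using hba.ne'), List.idxOf_cons_self]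
  rw [CT, dif_neg (List.cons_ne_nil _ _), hidx]
  simp [CT_singleton]

theorem CT_zigzag (k : ℕ) {a b : ℤ} (hba : b < a) : CT (zigzag k a b) = caterpillar k := by
  induction k generalizing a b with
  | zero => exact CT_singleton a
  | succ k ih =>
    rw [zigzag, CT_cons_cons hba (fun x hx => by have := le_of_mem_zigzag (by omega) hx; omega),
      ih (by omega), caterpillar]

theorem caterpillar_ne_nil (k : ℕ) : caterpillar k ≠ .nil := by
  cases k <;> simp [caterpillar]

theorem allNodes_caterpillar (k : ℕ) :
    AllNodes
      (fun t => ∀ l r : BTree, t = .node l r → ¬t.IsLeaf →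
        (l ≠ .nil ∧ r ≠ .nil ∧ l.IsLeaf)) (caterpillar k) := by
  induction k with
  | zero => exact ⟨fun _ _ _ hleaf => absurd rfl hleaf, trivial, trivial⟩
  | succ k ih =>
    refine ⟨?_, ⟨fun _ _ _ hleaf => absurd rfl hleaf, trivial, trivial⟩, ih⟩
    rintro l r ⟨rfl, rfl⟩ -
    exact ⟨BTree.noConfusion, caterpillar_ne_nil k, rfl⟩

theorem ofFn_eq_zigzag (k : ℕ) :
    List.ofFn (fun t : Fin (2 * k + 1) =>
        if t.val % 2 = 0 then (k : ℤ) + t.val / 2 + 1 else ((t.val : ℤ) + 1) / 2)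
      = zigzag k (k + 1) 1 := by
  refine List.ext_getElem (by simp [length_zigzag]) fun i _ _ => ?_
  rw [List.getElem_ofFn, getElem_zigzag]
  dsimp only
  split <;> push_cast <;> omega

/-- Let `k ≥ 1` and let `P` be the string of length `m = 2k+1` defined by
`P[2j-1] = k+j` for `1 ≤ j ≤ k+1` and `P[2j] = j` for `1 ≤ j ≤ k`, i.e.,
`P = (k+1, 1, k+2, 2, …, 2k, k, 2k+1)`. Then in the Cartesian tree `CT(P)`, every non-leaf
node has exactly two children, and the left child of every non-leaf node is a leaf. -/
theorem worst_case_pattern_shape (k : ℕ) (hk : 1 ≤ k) :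
    AllNodes
      (fun t => ∀ l r : BTree, t = .node l r → ¬t.IsLeaf →
        (l ≠ .nil ∧ r ≠ .nil ∧ l.IsLeaf))
      (CT (List.ofFn (fun t : Fin (2 * k + 1) =>
        if t.val % 2 = 0 then (k : ℤ) + t.val / 2 + 1 else ((t.val : ℤ) + 1) / 2))) := by
  rw [ofFn_eq_zigzag, CT_zigzag k (by omega : (1 : ℤ) < k + 1)]
  exact allNodes_caterpillar k
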